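/- Under the linear SEM y = β^T x + ε with W = E[x x^T] positive definite, E[ε] = 0, and x_j ⊥ ε for a fixed nondescendant index j*, the causal coefficient β satisfies (∇R(β))_{j*} = 0, where R(α) = E[(1/2)(α^T x − y)^2]. Consequently β minimizes the modified objective ‖∇R(α) ∘ α̃‖₂ where α̃_{j*} = 1 and α̃_j = α_j for j ≠ j*, achieving value 0. -/

import Mathlib

/-!
The residual of `α` is `(α - β)ᵀ x - ε`, so `R` is a quadratic polynomial in `α - β`
whose linear coefficient is `-E[x ε]`; hence `∇R(β) = -E[x ε]`. Independence of `ε` from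
`x_{j*}` and from the coordinates in the support of `β` makes those coordinates of
`E[x ε]` vanish, so every entry of `∇R(β) ∘ β̃` is zero.

No measurability of `x` or `ε` is assumed, only of `x_j ε`, `x_j²` and `ε²`. The factorisation
`E[x_j ε] = E[x_j] E[ε]` still holds: if `ε` is not a.e.-measurable, independence forces
`x_j = 0` a.e., and vice versa.
-/

open MeasureTheory ProbabilityTheory Set

theorem MeasureTheory.NullMeasurableSet.of_measure_add_measure_compl_le {Ω : Type*}
    [MeasurableSpace Ω] {μ : Measure Ω} [IsFiniteMeasure μ] {s : Set Ω}
    (h : μ s + μ sᶜ ≤ μ univ) : NullMeasurableSet s μ := by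
  set T := toMeasurable μ sᶜ
  have hT : MeasurableSet T := measurableSet_toMeasurable μ sᶜ
  have hTs : Tᶜ ⊆ s := compl_subset_comm.mp (subset_toMeasurable μ sᶜ)
  have hsT : μ (s ∩ T) = 0 := by
    have hsplit := measure_inter_add_sdiff (μ := μ) s hT
    rw [sdiff_eq, inter_eq_right.mpr hTs, measure_compl hT (measure_ne_top μ T),
      measure_toMeasurable] at hsplit
    have : μ (s ∩ T) + (μ univ - μ sᶜ) ≤ 0 + (μ univ - μ sᶜ) := by
      rw [hsplit, zero_add]
      exact ENNReal.le_sub_of_add_le_right (measure_ne_top μ _) h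
    exact le_antisymm ((ENNReal.add_le_add_iff_right
      (ENNReal.sub_ne_top (measure_ne_top μ _))).mp this) zero_le
  refine hT.compl.nullMeasurableSet.congr (ae_eq_set.mpr ⟨?_, ?_⟩)
  · rw [sdiff_eq_empty.mpr hTs, measure_empty]
  · rwa [sdiff_compl]

theorem ProbabilityTheory.IndepFun.nullMeasurableSet_preimage_right {Ω : Type*}
    [MeasurableSpace Ω] {μ : Measure Ω} [IsProbabilityMeasure μ] {X Y : Ω → ℝ}
    (h : IndepFun X Y μ) {s t : Set ℝ} (hs : MeasurableSet s) (ht : MeasurableSet t)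
    (hμs : μ (X ⁻¹' s) ≠ 0) {M : Set Ω} (hM : NullMeasurableSet M μ)
    (hM_inter : X ⁻¹' s ∩ M = X ⁻¹' s ∩ Y ⁻¹' t) :
    NullMeasurableSet (Y ⁻¹' t) μ := by
  -- splitting `μ (X ⁻¹' s)` along `M` and factorising both pieces gives
  -- `μ (Y ⁻¹' t) + μ (Y ⁻¹' t)ᶜ = 1`
  have hM_diff : X ⁻¹' s \ M = X ⁻¹' s \ Y ⁻¹' t := by
    rw [← sdiff_self_inter, hM_inter, sdiff_self_inter]
  refine NullMeasurableSet.of_measure_add_measure_compl_le ?_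
  have key : μ (X ⁻¹' s) * (μ (Y ⁻¹' t) + μ (Y ⁻¹' t)ᶜ) = μ (X ⁻¹' s) * μ univ := by
    rw [measure_univ, mul_one, mul_add, ← h.measure_inter_preimage_eq_mul s t hs ht,
      ← preimage_compl, ← h.measure_inter_preimage_eq_mul s tᶜ hs ht.compl, preimage_compl,
      ← sdiff_eq, ← hM_inter, ← hM_diff, measure_inter_add_sdiff₀ _ hM]
  exact ((ENNReal.mul_right_inj hμs (measure_ne_top μ _)).mp key).le

section
variable {Ω : Type*} [MeasurableSpace Ω] {μ : Measure Ω} [IsProbabilityMeasure μ] {X Y : Ω → ℝ}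

theorem ProbabilityTheory.IndepFun.aemeasurable_right_of_mul (h : IndepFun X Y μ)
    (hXY : AEMeasurable (fun ω => X ω * Y ω) μ) (hY : AEMeasurable (fun ω => |Y ω|) μ)
    (hX : μ (X ⁻¹' Ioi 0) ≠ 0) : AEMeasurable Y μ := by
  -- where `X > 0`, the sign of `Y` is the sign of the measurable `X * Y`
  have hpos : NullMeasurableSet (Y ⁻¹' Ioi 0) μ := by
    refine h.nullMeasurableSet_preimage_right measurableSet_Ioi measurableSet_Ioi hX
      (hXY.nullMeasurable (measurableSet_Ioi (a := 0))) ?_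
    ext ω
    simp only [mem_inter_iff, mem_preimage, mem_Ioi, and_congr_right_iff]
    exact fun hXω => mul_pos_iff_of_pos_left hXω
  have hY_eq : Y = fun ω => 2 * (Y ⁻¹' Ioi 0).indicator (fun ω => |Y ω|) ω - |Y ω| := by
    ext ω
    by_cases hω : 0 < Y ω
    · simp only [mem_preimage, mem_Ioi, hω, indicator_of_mem, abs_of_pos hω]
      ring
    · simp [hω, abs_of_nonpos (not_lt.mp hω)]
  rw [hY_eq]
  exact ((hY.indicator₀ hpos).const_mul 2).sub hY

theorem ProbabilityTheory.IndepFun.ae_eq_zero_of_not_aemeasurable_right (h : IndepFun X Y μ)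
    (hXY : AEMeasurable (fun ω => X ω * Y ω) μ) (hY : AEMeasurable (fun ω => |Y ω|) μ)
    (hY_not : ¬ AEMeasurable Y μ) : X =ᵐ[μ] 0 := by
  have hpos : μ (X ⁻¹' Ioi 0) = 0 := by
    by_contra hX
    exact hY_not (h.aemeasurable_right_of_mul hXY hY hX)
  have hneg : μ ((fun ω => -X ω) ⁻¹' Ioi 0) = 0 := by
    by_contra hX
    refine hY_not ((h.comp measurable_neg measurable_id).aemeasurable_right_of_mul ?_ hY hX)
    convert hXY.neg using 1
    ext ω
    simp
  refine measure_mono_null (fun ω hω => ?_) (measure_union_null hpos hneg)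
  rcases lt_or_gt_of_ne hω with hlt | hgt
  · exact Or.inr (neg_pos.mpr hlt)
  · exact Or.inl hgt

theorem ProbabilityTheory.IndepFun.integral_mul_eq_zero (h : IndepFun X Y μ)
    (hXY : AEMeasurable (fun ω => X ω * Y ω) μ) (hX : AEMeasurable (fun ω => |X ω|) μ)
    (hY : AEMeasurable (fun ω => |Y ω|) μ) (hY_mean : ∫ ω, Y ω ∂μ = 0) :
    ∫ ω, X ω * Y ω ∂μ = 0 := by
  by_cases hXm : AEMeasurable X μ
  · by_cases hYm : AEMeasurable Y μ
    · rw [h.integral_fun_mul_eq_mul_integral hXm.aestronglyMeasurable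
        hYm.aestronglyMeasurable, hY_mean, mul_zero]
    · refine integral_eq_zero_of_ae ?_
      filter_upwards [h.ae_eq_zero_of_not_aemeasurable_right hXY hY hYm] with ω hω
      simp [hω]
  · refine integral_eq_zero_of_ae ?_
    have hYX : AEMeasurable (fun ω => Y ω * X ω) μ := by simpa only [mul_comm] using hXY
    filter_upwards [h.symm.ae_eq_zero_of_not_aemeasurable_right hYX hX hXm] with ω hω
    simp [hω]
end

theorem integral_half_sq_sum_mul_sub {Ω ι : Type*} [MeasurableSpace Ω] [Fintype ι]
    {μ : Measure Ω} (x : Ω → ι → ℝ) (ε : Ω → ℝ)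
    (hxx : ∀ i j, Integrable (fun ω => x ω i * x ω j) μ)
    (hxε : ∀ j, Integrable (fun ω => x ω j * ε ω) μ) (hε : Integrable (fun ω => ε ω ^ 2) μ)
    (v : ι → ℝ) :
    ∫ ω, 1 / 2 * ((∑ j, v j * x ω j) - ε ω) ^ 2 ∂μ =
      ∑ i, ∑ j, v i * v j * (1 / 2 * ∫ ω, x ω i * x ω j ∂μ)
        - ∑ j, v j * ∫ ω, x ω j * ε ω ∂μ + 1 / 2 * ∫ ω, ε ω ^ 2 ∂μ := by
  have hpointwise : ∀ ω, 1 / 2 * ((∑ j, v j * x ω j) - ε ω) ^ 2 =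
      ∑ i, ∑ j, v i * v j * (1 / 2) * (x ω i * x ω j)
        - ∑ j, v j * (x ω j * ε ω) + 1 / 2 * ε ω ^ 2 := by
    intro ω
    set S := ∑ j, v j * x ω j
    have hSS : ∑ i, ∑ j, v i * v j * (1 / 2) * (x ω i * x ω j) = 1 / 2 * (S * S) := by
      rw [Finset.sum_mul_sum, Finset.mul_sum]
      refine Finset.sum_congr rfl fun i _ => ?_
      rw [Finset.mul_sum]
      exact Finset.sum_congr rfl fun j _ => by ring
    have hSε : ∑ j, v j * (x ω j * ε ω) = S * ε ω := by
      rw [Finset.sum_mul]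
      exact Finset.sum_congr rfl fun j _ => by ring
    rw [hSS, hSε]
    ring
  have hquad : ∀ i j, Integrable (fun ω => v i * v j * (1 / 2) * (x ω i * x ω j)) μ :=
    fun i j => (hxx i j).const_mul _
  have hquad_sum : ∀ i, Integrable (fun ω => ∑ j, v i * v j * (1 / 2) * (x ω i * x ω j)) μ :=
    fun i => integrable_finsetSum _ fun j _ => hquad i j
  have hlin : ∀ j, Integrable (fun ω => v j * (x ω j * ε ω)) μ := fun j => (hxε j).const_mul _
  simp_rw [hpointwise]
  have hQ := integrable_finsetSum Finset.univ fun i _ => hquad_sum i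
  have hL := integrable_finsetSum Finset.univ fun j _ => hlin j
  rw [integral_add (hQ.sub' hL) (hε.const_mul _), integral_sub hQ hL,
    integral_finsetSum _ fun i _ => hquad_sum i, integral_finsetSum _ fun j _ => hlin j,
    integral_const_mul]
  congr 2 <;> refine Finset.sum_congr rfl fun i _ => ?_
  · rw [integral_finsetSum _ fun j _ => hquad i j]
    refine Finset.sum_congr rfl fun j _ => ?_
    rw [integral_const_mul]
    ring
  · rw [integral_const_mul]

theorem hasGradientAt_quadratic_sub {ι : Type*} [Fintype ι] (A : ι → ι → ℝ) (c : ι → ℝ)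
    (C : ℝ) (β : EuclideanSpace ℝ ι) :
    HasGradientAt (fun α : EuclideanSpace ℝ ι =>
        ∑ i, ∑ j, (α i - β i) * (α j - β j) * A i j - ∑ j, (α j - β j) * c j + C)
      (WithLp.toLp 2 (-c)) β := by
  have hcoord : ∀ i, HasFDerivAt (fun α : EuclideanSpace ℝ ι => α i - β i)
      (EuclideanSpace.proj i : EuclideanSpace ℝ ι →L[ℝ] ℝ) β :=
    fun i => (EuclideanSpace.proj i : EuclideanSpace ℝ ι →L[ℝ] ℝ).hasFDerivAt.sub_const (β i)
  have hquad : HasFDerivAt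
      (fun α : EuclideanSpace ℝ ι => ∑ i, ∑ j, (α i - β i) * (α j - β j) * A i j)
      (0 : EuclideanSpace ℝ ι →L[ℝ] ℝ) β := by
    refine (HasFDerivAt.fun_sum fun i _ => HasFDerivAt.fun_sum fun j _ =>
      ((hcoord i).mul (hcoord j)).mul_const (A i j)).congr_fderiv ?_
    simp
  have hlin := HasFDerivAt.fun_sum fun j (_ : j ∈ Finset.univ) => (hcoord j).mul_const (c j)
  rw [hasGradientAt_iff_hasFDerivAt]
  refine ((hquad.sub hlin).add_const C).congr_fderiv ?_
  ext v
  simp [PiLp.inner_apply, mul_comm]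

theorem aemeasurable_abs_of_mul_self {Ω : Type*} [MeasurableSpace Ω] {μ : Measure Ω}
    {f : Ω → ℝ} (h : AEMeasurable (fun ω => f ω * f ω) μ) :
    AEMeasurable (fun ω => |f ω|) μ := by
  simpa only [Real.sqrt_mul_self_eq_abs] using h.sqrt

theorem coco_modified_causal_zero_general {p : ℕ} {Ω : Type*} [MeasurableSpace Ω]
    (μ : Measure Ω) [IsProbabilityMeasure μ]
    (x : Ω → EuclideanSpace ℝ (Fin p)) (ε : Ω → ℝ)
    (β : EuclideanSpace ℝ (Fin p)) (jstar : Fin p)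
    (S : Finset (Fin p)) (hS : ∀ j, j ∈ S ↔ β j ≠ 0)
    (hε : ∫ ω, ε ω ∂μ = 0)
    (hindepS : IndepFun (fun ω => fun j : S => x ω j) ε μ)
    (hindepj : IndepFun (fun ω => x ω jstar) ε μ)
    (hintxx : ∀ i j, Integrable (fun ω => x ω i * x ω j) μ)
    (hintxε : ∀ j, Integrable (fun ω => x ω j * ε ω) μ)
    (hintε : Integrable (fun ω => ε ω ^ 2) μ)
    (y : Ω → ℝ) (hy : ∀ ω, y ω = (∑ j, β j * x ω j) + ε ω)
    (R : EuclideanSpace ℝ (Fin p) → ℝ)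
    (hR : ∀ α, R α = ∫ ω, (1 / 2) * ((∑ j, α j * x ω j) - y ω) ^ 2 ∂μ) :
    gradient R β jstar = 0 ∧
    Real.sqrt (∑ j, (gradient R β j * (if j = jstar then 1 else β j)) ^ 2) = 0 ∧
    ∀ α : EuclideanSpace ℝ (Fin p),
      Real.sqrt (∑ j, (gradient R β j * (if j = jstar then 1 else β j)) ^ 2) ≤
        Real.sqrt (∑ j, (gradient R α j * (if j = jstar then 1 else α j)) ^ 2) := by
  set c : Fin p → ℝ := fun j => ∫ ω, x ω j * ε ω ∂μ
  have hc : ∀ j, (j = jstar ∨ β j ≠ 0) → c j = 0 := by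
    intro j hj
    have hind : IndepFun (fun ω => x ω j) ε μ := by
      rcases hj with rfl | hβj
      · exact hindepj
      · exact hindepS.comp (measurable_pi_apply ⟨j, (hS j).mpr hβj⟩) measurable_id
    refine hind.integral_mul_eq_zero (hintxε j).aemeasurable
      (aemeasurable_abs_of_mul_self (hintxx j j).aemeasurable)
      (aemeasurable_abs_of_mul_self ?_) hε
    simpa only [sq] using hintε.aemeasurable
  have hR_eq : R = fun α => ∑ i, ∑ j, (α i - β i) * (α j - β j) * (1 / 2 * ∫ ω, x ω i * x ω j ∂μ)
      - ∑ j, (α j - β j) * c j + 1 / 2 * ∫ ω, ε ω ^ 2 ∂μ := by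
    funext α
    rw [hR, ← integral_half_sq_sum_mul_sub (fun ω => ⇑(x ω)) ε hintxx hintxε hintε]
    refine integral_congr_ae (ae_of_all μ fun ω => ?_)
    simp only [hy, sub_mul, Finset.sum_sub_distrib]
    ring
  have hgrad : gradient R β = WithLp.toLp 2 (-c) := by
    rw [hR_eq]
    exact (hasGradientAt_quadratic_sub _ c _ β).gradient
  have hterm : ∀ j, gradient R β j * (if j = jstar then 1 else β j) = 0 := by
    intro j
    by_cases hj : j = jstar
    · simp [hj, hgrad, hc jstar (Or.inl rfl)]
    · by_cases hβj : β j = 0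
      · simp [hj, hβj]
      · simp [hj, hgrad, hc j (Or.inr hβj)]
  have hzero : Real.sqrt (∑ j, (gradient R β j * (if j = jstar then 1 else β j)) ^ 2) = 0 := by
    simp [hterm]
  exact ⟨by simpa using hterm jstar, hzero, fun α => hzero ▸ Real.sqrt_nonneg _⟩

/-- Under the linear SEM with `W = E[x xᵀ]` positive definite, `E[ε] = 0` and
`x_{j*} ⊥ ε` for a fixed nondescendant index `j*`, the causal coefficient `β`
satisfies `(∇R(β))_{j*} = 0`; consequently `β` minimizes the modified CoCo
objective `‖∇R(α) ∘ α̃‖₂` (with `α̃_{j*} = 1`, `α̃_j = α_j` otherwise),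
achieving the value `0`. -/
theorem coco_modified_causal_zero {p : ℕ} {Ω : Type*} [MeasurableSpace Ω]
    (μ : Measure Ω) [IsProbabilityMeasure μ]
    (x : Ω → EuclideanSpace ℝ (Fin p)) (ε : Ω → ℝ)
    (β : EuclideanSpace ℝ (Fin p)) (jstar : Fin p)
    (S : Finset (Fin p)) (hS : ∀ j, j ∈ S ↔ β j ≠ 0)
    (W : Matrix (Fin p) (Fin p) ℝ)
    (hW : ∀ i j, W i j = ∫ ω, x ω i * x ω j ∂μ)
    (hWpd : W.PosDef)
    (hε : ∫ ω, ε ω ∂μ = 0)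
    (hindepS : IndepFun (fun ω => fun j : S => x ω j) ε μ)
    (hindepj : IndepFun (fun ω => x ω jstar) ε μ)
    (hintxx : ∀ i j, Integrable (fun ω => x ω i * x ω j) μ)
    (hintxε : ∀ j, Integrable (fun ω => x ω j * ε ω) μ)
    (hintε : Integrable (fun ω => ε ω ^ 2) μ)
    (y : Ω → ℝ) (hy : ∀ ω, y ω = (∑ j, β j * x ω j) + ε ω)
    (R : EuclideanSpace ℝ (Fin p) → ℝ)
    (hR : ∀ α, R α = ∫ ω, (1 / 2) * ((∑ j, α j * x ω j) - y ω) ^ 2 ∂μ) :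
    gradient R β jstar = 0 ∧
    Real.sqrt (∑ j, (gradient R β j * (if j = jstar then 1 else β j)) ^ 2) = 0 ∧
    ∀ α : EuclideanSpace ℝ (Fin p),
      Real.sqrt (∑ j, (gradient R β j * (if j = jstar then 1 else β j)) ^ 2) ≤
        Real.sqrt (∑ j, (gradient R α j * (if j = jstar then 1 else α j)) ^ 2) :=
  coco_modified_causal_zero_general μ x ε β jstar S hS hε hindepS hindepj hintxx hintxε hintε y hy R
    hR
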